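/- arXiv:1609.06995 — 4 statements merged into one kernel-verified Lean document; each statement's English description precedes it below -/
import Mathlib

section
/- (Krattenthaler determinant evaluation) For variables x_1,...,x_n and parameters A_2,...,A_n, B_2,...,B_n, one has det_{1≤i,j≤n}( (x_i + A_n)(x_i + A_{n-1})⋯(x_i + A_{j+1}) · (x_i + B_j)(x_i + B_{j-1})⋯(x_i + B_2) ) = Δ_n(x) · ∏_{2≤i≤j≤n} (B_i - A_j). -/
/-!
Subtracting column `j - 1` from column `j` of the matrix leaves only the difference of the two
factors in which these columns differ, `(x + B_{j+1}) - (x + A_{j+1}) = B_{j+1} - A_{j+1}`, a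
scalar. So one round of such column operations trades the top factor `x + B_k` of each column for
a scalar, without changing the determinant. After `n` rounds (round `r` acting on the columns
`j > r`, and collecting the factors `B_i - A_j` with `j - i = r`) no `B`-factors are left: column
`j` is the monic polynomial `∏_{k ≥ j+2} (x + A_k)` of degree `n - 1 - j`, evaluated at `x_i`,
and the determinant of such a matrix is the Vandermonde determinant.
-/

open Finset Polynomial

theorem Fin.prod_Ioi_rev {M : Type*} [CommMonoid M] {n : ℕ} (f : Fin n → Fin n → M) :
    ∏ i : Fin n, ∏ j ∈ Ioi i, f (Fin.rev j) (Fin.rev i) = ∏ i, ∏ j ∈ Ioi i, f i j := by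
  rw [← Equiv.prod_comp Fin.revPerm]
  simp_rw [Fin.revPerm_apply, Fin.rev_rev, ← Fin.map_revPerm_Iio, prod_map]
  simp only [Equiv.coe_toEmbedding, Fin.revPerm_apply, Fin.rev_rev]
  exact prod_comm' (by simp)

namespace Matrix

variable {R : Type*} [CommRing R] {n : ℕ}

variable (R) in
def subPrevCol (n r : ℕ) : Matrix (Fin n) (Fin n) R :=
  of fun l j => if l = j then 1 else if l.val + 1 = j.val ∧ r < j.val then -1 else 0

theorem det_subPrevCol (n r : ℕ) : (subPrevCol R n r).det = 1 := by
  rw [det_of_isUpperTriangular]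
  · simp [subPrevCol]
  · intro l j hjl
    have hjl : j < l := hjl
    have hne : l.val + 1 ≠ j.val := by omega
    simp [subPrevCol, hjl.ne', hne]

theorem mul_subPrevCol_apply_of_le (M : Matrix (Fin n) (Fin n) R) {r : ℕ} (i : Fin n)
    {j : Fin n} (hj : j.val ≤ r) : (M * subPrevCol R n r) i j = M i j := by
  rw [mul_apply, sum_eq_single j]
  · simp [subPrevCol]
  · intro l _ hlj
    simp [subPrevCol, hlj, show ¬ r < j.val by omega]
  · simp

theorem mul_subPrevCol_apply_of_lt (M : Matrix (Fin n) (Fin n) R) {r : ℕ} (i : Fin n)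
    {j l : Fin n} (hl : l.val + 1 = j.val) (hj : r < j.val) :
    (M * subPrevCol R n r) i j = M i j - M i l := by
  have hlj : l ≠ j := fun h => by subst h; omega
  rw [mul_apply, Fintype.sum_eq_add j l hlj.symm]
  · simp [subPrevCol, hl, hj, hlj, sub_eq_add_neg]
  · rintro k ⟨hkj, hkl⟩
    have : k.val + 1 ≠ j.val := fun h => hkl (Fin.ext (by omega))
    simp [subPrevCol, hkj, this]

theorem det_eq_prod_mul_det_of_sub_prev_col (M N : Matrix (Fin n) (Fin n) R) (d : Fin n → R)
    (r : ℕ) (hle : ∀ i j, j.val ≤ r → M i j = d j * N i j)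
    (hlt : ∀ i j l, l.val + 1 = j.val → r < j.val → M i j - M i l = d j * N i j) :
    M.det = (∏ j, d j) * N.det := by
  have hmul : M * subPrevCol R n r = N * diagonal d := by
    ext i j
    rw [mul_diagonal, mul_comm]
    by_cases hj : j.val ≤ r
    · rw [mul_subPrevCol_apply_of_le M i hj, hle i j hj]
    · have hl : (⟨j.val - 1, by omega⟩ : Fin n).val + 1 = j.val := by simp; omega
      rw [mul_subPrevCol_apply_of_lt M i hl (by omega), hlt i j _ hl (by omega)]
  simpa [det_mul, det_subPrevCol, mul_comm] using congrArg det hmul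

theorem det_eval_monic_natDegree_rev (x : Fin n → R) (p : Fin n → R[X])
    (hdeg : ∀ j, (p j).natDegree = n - 1 - j) (hmonic : ∀ j, (p j).Monic) :
    (of fun i j => (p j).eval (x i)).det = ∏ i, ∏ j ∈ Ioi i, (x i - x j) := by
  have hrev := det_eval_matrixOfPolynomials_eq_det_vandermonde (x ∘ Fin.rev) (p ∘ Fin.rev)
    (fun j => by simp only [Function.comp_apply, hdeg, Fin.val_rev]; omega) (fun j => hmonic _)
  rw [← det_submatrix_equiv_self Fin.revPerm, ← Fin.prod_Ioi_rev, ← det_vandermonde]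
  exact hrev.symm

theorem det_prod_add_eq_prod_sub (x : Fin n → R) (A : ℕ → R) :
    (of fun i j : Fin n => ∏ k ∈ Icc (j.val + 2) n, (x i + A k)).det =
      ∏ i, ∏ j ∈ Ioi i, (x i - x j) := by
  nontriviality R
  have hmonic (j : Fin n) : (∏ k ∈ Icc (j.val + 2) n, (X + C (A k))).Monic :=
    monic_prod_of_monic _ _ fun k _ => monic_X_add_C _
  have hdeg (j : Fin n) : (∏ k ∈ Icc (j.val + 2) n, (X + C (A k))).natDegree = n - 1 - j := by
    rw [natDegree_prod_of_monic _ _ fun k _ => monic_X_add_C _]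
    simp only [natDegree_X_add_C, sum_const, smul_eq_mul, mul_one, Nat.card_Icc]
    omega
  rw [← det_eval_monic_natDegree_rev x _ hdeg hmonic]
  simp [eval_prod]

end Matrix

namespace Krattenthaler

variable {R : Type*} [CommRing R]

theorem prod_sub_prod_prev (a : R) (A B : ℕ → R) {n r l : ℕ} (hr : r ≤ l)
    (hl : l + 2 ≤ n) :
    (∏ k ∈ Icc (l + 3) n, (a + A k)) * ∏ k ∈ Icc 2 (l + 2 - r), (a + B k) -
        (∏ k ∈ Icc (l + 2) n, (a + A k)) * ∏ k ∈ Icc 2 (l + 1 - r), (a + B k) =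
      (B (l + 2 - r) - A (l + 2)) *
        ((∏ k ∈ Icc (l + 3) n, (a + A k)) * ∏ k ∈ Icc 2 (l + 1 - r), (a + B k)) := by
  rw [show l + 2 - r = l + 1 - r + 1 by omega, prod_Icc_succ_top (by omega),
    ← insert_Icc_add_one_left_eq_Icc hl, prod_insert (by simp), show l + 2 + 1 = l + 3 from rfl]
  ring

variable (n : ℕ) (x : Fin n → R) (A B : ℕ → R)

def reducedMatrix (r : ℕ) : Matrix (Fin n) (Fin n) R :=
  Matrix.of fun i j =>
    (∏ k ∈ Icc (j.val + 2) n, (x i + A k)) * ∏ k ∈ Icc 2 (j.val + 1 - r), (x i + B k)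

def roundFactor (r : ℕ) : R :=
  ∏ j : Fin n, if r < j.val then B (j.val + 1 - r) - A (j.val + 1) else 1

theorem det_reducedMatrix_eq_mul (r : ℕ) :
    (reducedMatrix n x A B r).det = roundFactor n A B r * (reducedMatrix n x A B (r + 1)).det := by
  refine Matrix.det_eq_prod_mul_det_of_sub_prev_col _ _ _ r (fun i j hj => ?_)
    fun i j l hl hr => ?_
  · simp only [reducedMatrix, Matrix.of_apply, if_neg (show ¬ r < j.val by omega), one_mul]
    rw [Icc_eq_empty (show ¬ 2 ≤ j.val + 1 - r by omega),
      Icc_eq_empty (show ¬ 2 ≤ j.val + 1 - (r + 1) by omega)]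
  · have hjn := j.isLt
    simp only [reducedMatrix, Matrix.of_apply, ← hl]
    rw [if_pos (by omega), show l.val + 1 + 2 = l.val + 3 by omega,
      show l.val + 1 + 1 = l.val + 2 by omega,
      show l.val + 1 + 1 - (r + 1) = l.val + 1 - r by omega]
    exact prod_sub_prod_prev (x i) A B (by omega) (by omega)

theorem det_reducedMatrix_zero (t : ℕ) :
    (reducedMatrix n x A B 0).det =
      (∏ r ∈ range t, roundFactor n A B r) * (reducedMatrix n x A B t).det := by
  induction t with
  | zero => simp
  | succ t ih => rw [ih, det_reducedMatrix_eq_mul, prod_range_succ, mul_assoc]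

theorem reducedMatrix_self :
    reducedMatrix n x A B n = Matrix.of fun i j => ∏ k ∈ Icc (j.val + 2) n, (x i + A k) := by
  ext i j
  rw [reducedMatrix, Matrix.of_apply, Matrix.of_apply,
    Icc_eq_empty (show ¬ 2 ≤ j.val + 1 - n by omega), prod_empty, mul_one]

theorem prod_roundFactor :
    ∏ r ∈ range n, roundFactor n A B r = ∏ i ∈ Icc 2 n, ∏ j ∈ Icc i n, (B i - A j) := by
  have hround (r : ℕ) :
      roundFactor n A B r = ∏ j ∈ (range n).filter (r < ·), (B (j + 1 - r) - A (j + 1)) := by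
    rw [prod_filter]
    exact Fin.prod_univ_eq_prod_range (fun j => if r < j then B (j + 1 - r) - A (j + 1) else 1) n
  rw [prod_congr rfl fun r _ => hround r, prod_sigma', prod_sigma']
  refine prod_nbij' (fun p => ⟨p.2 + 1 - p.1, p.2 + 1⟩) (fun p => ⟨p.2 - p.1, p.2 - 1⟩)
    ?_ ?_ ?_ ?_ fun _ _ => rfl
  all_goals
    rintro ⟨a, b⟩ h
    simp only [mem_sigma, mem_range, mem_filter, mem_Icc, Sigma.mk.injEq, heq_eq_eq]
      at h ⊢
    omega

end Krattenthaler

/-- Krattenthaler's determinant evaluation, Lemma 3 of "Advanced determinant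
calculus": with rows/columns indexed by `1 ≤ i,j ≤ n` (here `i = i₀+1`, `j = j₀+1` for
`i₀ j₀ : Fin n`),
`det((x_i+A_n)⋯(x_i+A_{j+1})·(x_i+B_j)⋯(x_i+B_2)) = Δ_n(x)·∏_{2≤i≤j≤n}(B_i - A_j)`. -/
theorem stmt_9 {R : Type*} [CommRing R] (n : ℕ) (x : Fin n → R) (A B : ℕ → R) :
    Matrix.det (Matrix.of fun i j : Fin n =>
        (∏ k ∈ Finset.Icc (j.val + 2) n, (x i + A k)) *
          ∏ k ∈ Finset.Icc 2 (j.val + 1), (x i + B k))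
      = (∏ i : Fin n, ∏ j ∈ Finset.Ioi i, (x i - x j)) *
        ∏ i ∈ Finset.Icc 2 n, ∏ j ∈ Finset.Icc i n, (B i - A j) := by
  change (Krattenthaler.reducedMatrix n x A B 0).det = _
  rw [Krattenthaler.det_reducedMatrix_zero n x A B n, Krattenthaler.reducedMatrix_self,
    Matrix.det_prod_add_eq_prod_sub, Krattenthaler.prod_roundFactor, mul_comm]
end

section
/- More generally, for distinct reals y_1,...,y_n, x_1,...,x_m with Q(z) := ∏_1^m(z-x_i)∏_1^n(z-y_j), and for 0 ≤ k ≤ n, one has Δ_n^{(n-k)-hat}(y) / Δ_{n+m}(x,y) = (-1)^{m(m-1)/2} · Δ_m(x) · e_k(y) / ∏_{ℓ=1}^m Q'(x_ℓ), where Δ_n^{ĵ}(y) denotes the n×n determinant of powers y_i^{n}, ..., y_i^{0} with the column of exponent j removed, which equals Δ_n(y)·e_{n-j}(y). -/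
/-!
Expanding the Vandermonde determinant of `(t, y₁, …, yₙ)` along the row of `t` writes
`Δ(y) ∏ⱼ (t - yⱼ)` as `∑ⱼ (-1)ʲ tⁿ⁻ʲ Δ^{(n-j)-hat}(y)`, so comparing coefficients with Vieta's
formula gives `Δ^{(n-k)-hat}(y) = Δ(y) eₖ(y)`. For the quotient, `Δ(x, y) = Δ(x) Δ(y) ∏ (xₐ - y_b)`
and `Q'(xₗ) = ∏_{a ≠ l} (xₗ - xₐ) ∏_b (xₗ - y_b)`; pairing the factors `(xₗ - xₐ)(xₐ - xₗ)` shows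
`∏ₗ Q'(xₗ) = (-1)^{m(m-1)/2} Δ(x)² ∏ (xₐ - y_b)`.
-/

open Finset Polynomial Matrix

local notation "Δ" v:max => ∏ i, ∏ j ∈ Ioi i, (v i - v j)

variable {R : Type*} [CommRing R]

theorem det_of_pow_sub_one_sub {n : ℕ} (v : Fin n → R) :
    det (of fun i j : Fin n => v i ^ (n - 1 - j)) = Δ v := by
  convert det_projVandermonde 1 v using 2
  · ext i j; simp [projVandermonde_apply, Fin.val_rev, Nat.sub_sub, add_comm]
  · simp

theorem prod_prod_Ioi_append {M : Type*} [CommMonoid M] {m n : ℕ}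
    (f : Fin (m + n) → Fin (m + n) → M) :
    ∏ i, ∏ j ∈ Ioi i, f i j =
      (∏ a, ∏ a' ∈ Ioi a, f (Fin.castAdd n a) (Fin.castAdd n a')) *
        (∏ a, ∏ b, f (Fin.castAdd n a) (Fin.natAdd m b)) *
        ∏ b, ∏ b' ∈ Ioi b, f (Fin.natAdd m b) (Fin.natAdd m b') := by
  have castAdd_lt_natAdd (a : Fin m) (b : Fin n) : Fin.castAdd n a < Fin.natAdd m b := by
    simp only [Fin.lt_def, Fin.val_castAdd, Fin.val_natAdd]; omega
  simp only [← filter_lt_eq_Ioi, prod_filter, Fin.prod_univ_add, castAdd_lt_natAdd,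
    (castAdd_lt_natAdd _ _).not_gt, if_true, if_false, prod_const_one, mul_one,
    (Fin.strictMono_castAdd n).lt_iff_lt, Fin.natAdd_lt_natAdd_iff, prod_mul_distrib, mul_assoc]

theorem prod_Ioi_sub_append {m n : ℕ} (x : Fin m → R) (y : Fin n → R) :
    Δ (Fin.append x y) = Δ x * (∏ a, ∏ b, (x a - y b)) * Δ y := by
  simp only [prod_prod_Ioi_append, Fin.append_left, Fin.append_right]

theorem prod_Ioi_sub_cons {n : ℕ} (t : R) (v : Fin n → R) :
    Δ (Fin.cons t v : Fin (n + 1) → R) = (∏ j, (t - v j)) * Δ v := by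
  simp [Fin.prod_univ_succ]

theorem prod_Ioi_sub_ne_zero [IsDomain R] {n : ℕ} {v : Fin n → R} (hv : Function.Injective v) :
    Δ v ≠ 0 :=
  prod_ne_zero_iff.mpr fun _ _ => prod_ne_zero_iff.mpr fun _ hj =>
    sub_ne_zero.mpr (hv.ne (mem_Ioi.mp hj).ne)

theorem coeff_prod_X_sub_C {n : ℕ} (y : Fin n → R) {k : ℕ} (hk : k ≤ n) :
    (∏ j, (X - C (y j))).coeff (n - k) = (-1) ^ k * ∑ s ∈ powersetCard k univ, ∏ i ∈ s, y i := by
  have := (univ.val.map y).prod_X_sub_C_coeff (k := n - k) (by simp)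
  simp only [Multiset.map_map, Function.comp_def, Multiset.card_map, card_val, card_univ,
    Fintype.card_fin, Nat.sub_sub_self hk, Finset.esymm_map_val] at this
  exact this

theorem sum_det_pow_succAbove_mul_X_pow {n : ℕ} (y : Fin n → R) :
    ∑ j : Fin (n + 1), C ((-1) ^ (j : ℕ) * det (of fun i c : Fin n => y i ^ (n - j.succAbove c)))
        * X ^ (n - j) = C (Δ y) * ∏ j, (X - C (y j)) := by
  have hdet := det_of_pow_sub_one_sub (Fin.cons X (C ∘ y) : Fin (n + 1) → R[X])
  rw [prod_Ioi_sub_cons, det_succ_row_zero] at hdet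
  have hminor (j : Fin (n + 1)) :
      (of fun i j : Fin (n + 1) =>
          (Fin.cons X (C ∘ y) : Fin (n + 1) → R[X]) i ^ (n + 1 - 1 - j)).submatrix
        Fin.succ j.succAbove = (of fun i c => y i ^ (n - j.succAbove c)).map C := by
    ext i c; simp
  simp only [hminor, ← RingHom.mapMatrix_apply, ← RingHom.map_det] at hdet
  simp only [Function.comp_apply, ← map_sub, ← map_prod, mul_comm _ (C _)] at hdet
  rw [← hdet]
  refine sum_congr rfl fun j _ => ?_
  simp only [of_apply, Fin.cons_zero, Nat.add_sub_cancel, map_mul, map_pow, map_neg, map_one]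
  ring

/-- The columns carry the exponents `n, …, 1, 0` with `n - k` omitted. -/
theorem det_pow_succAbove {n : ℕ} (y : Fin n → R) (k : Fin (n + 1)) :
    det (of fun i c : Fin n => y i ^ (n - k.succAbove c)) =
      Δ y * ∑ s ∈ powersetCard k univ, ∏ i ∈ s, y i := by
  have hcoeff := congrArg (coeff · (n - k)) (sum_det_pow_succAbove_mul_X_pow y)
  simp only [finsetSum_coeff, coeff_C_mul, coeff_X_pow] at hcoeff
  rw [coeff_prod_X_sub_C y k.is_le, sum_eq_single k] at hcoeff
  · rw [if_pos rfl, mul_one, mul_left_comm] at hcoeff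
    exact ((isUnit_neg_one (α := R)).pow k).mul_left_cancel hcoeff
  · intro j _ hjk
    rw [if_neg (fun h => hjk (by have := j.is_le; have := k.is_le; omega)), mul_zero]
  · simp

theorem prod_prod_erase_eq_prod_prod_Ioi {M : Type*} [CommMonoid M] {m : ℕ}
    (f : Fin m → Fin m → M) :
    ∏ i, ∏ j ∈ univ.erase i, f i j = ∏ i, ∏ j ∈ Ioi i, (f i j * f j i) := by
  calc ∏ i, ∏ j ∈ univ.erase i, f i j = ∏ i, (∏ j ∈ Ioi i, f i j) * ∏ j ∈ Iio i, f i j := by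
        refine prod_congr rfl fun i _ => ?_
        rw [← prod_union (disjoint_left.mpr fun j hi hj => (mem_Ioi.mp hi).asymm (mem_Iio.mp hj))]
        congr 1
        ext j
        simpa [or_comm] using ne_comm.trans lt_or_lt_iff_ne.symm
    _ = (∏ i, ∏ j ∈ Ioi i, f i j) * ∏ j, ∏ i ∈ Ioi j, f i j := by
        rw [prod_mul_distrib]
        exact congrArg _ (prod_comm' fun _ _ => by simp)
    _ = _ := by simp only [← prod_mul_distrib]

theorem sum_card_Ioi_fin (m : ℕ) : ∑ i : Fin m, #(Ioi i) = m * (m - 1) / 2 := by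
  simp only [Fin.card_Ioi]
  rw [Fin.sum_univ_eq_sum_range (fun i => m - 1 - i), sum_range_reflect (fun i => i) m,
    sum_range_id]

theorem prod_prod_erase_sub {m : ℕ} (x : Fin m → R) :
    ∏ l, ∏ a ∈ univ.erase l, (x l - x a) = (-1) ^ (m * (m - 1) / 2) * (Δ x) ^ 2 := by
  rw [prod_prod_erase_eq_prod_prod_Ioi, ← sum_card_Ioi_fin, ← prod_pow_eq_pow_sum]
  simp only [← prod_const, ← prod_pow, ← prod_mul_distrib]
  exact prod_congr rfl fun i _ => prod_congr rfl fun j _ => by ring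

theorem eval_derivative_prod_X_sub_C_mul {ι : Type*} [Fintype ι] [DecidableEq ι] (x : ι → R)
    (S : R[X]) (l : ι) :
    (derivative ((∏ i, (X - C (x i))) * S)).eval (x l) =
      (∏ a ∈ univ.erase l, (x l - x a)) * S.eval (x l) := by
  have hnodal : ∏ i, (X - C (x i)) = Lagrange.nodal univ x := (Lagrange.nodal_eq _ _).symm
  rw [derivative_mul, eval_add, eval_mul, eval_mul, hnodal,
    Lagrange.eval_nodal_at_node (mem_univ l), zero_mul, add_zero,
    Lagrange.eval_nodal_derivative_eval_node_eq (mem_univ l), Lagrange.eval_nodal]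

theorem prod_eval_derivative_prod_X_sub_C_mul_prod {m n : ℕ} (x : Fin m → R) (y : Fin n → R) :
    ∏ l, (derivative ((∏ i, (X - C (x i))) * ∏ j, (X - C (y j)))).eval (x l) =
      (-1) ^ (m * (m - 1) / 2) * (Δ x) ^ 2 * ∏ a, ∏ b, (x a - y b) := by
  simp only [eval_derivative_prod_X_sub_C_mul, eval_prod, eval_sub, eval_X, eval_C,
    prod_mul_distrib, prod_prod_erase_sub]

/-- for distinct reals `y_1,...,y_n, x_1,...,x_m`,
`Q(z) = ∏(z-x_i)∏(z-y_j)` and `0 ≤ k ≤ n`, the Vandermonde determinant with the column of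
exponent `n-k` removed (columns carry exponents `n, n-1, ..., 0` with `n-k` omitted)
satisfies `Δ_n^{(n-k)-hat}(y) = Δ_n(y)·e_k(y)` and
`Δ_n^{(n-k)-hat}(y)/Δ_{n+m}(x,y) = (-1)^{m(m-1)/2}·Δ_m(x)·e_k(y)/∏_ℓ Q'(x_ℓ)`. -/
theorem stmt_11 (m n k : ℕ) (hk : k ≤ n) (x : Fin m → ℝ) (y : Fin n → ℝ)
    (hdist : Function.Injective (Fin.append x y)) :
    (Matrix.det (Matrix.of fun i c : Fin n =>
        y i ^ (if c.val < k then n - c.val else n - 1 - c.val))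
      = (∏ i : Fin n, ∏ j ∈ Finset.Ioi i, (y i - y j)) *
          ∑ s ∈ Finset.powersetCard k (Finset.univ : Finset (Fin n)), ∏ i ∈ s, y i) ∧
    Matrix.det (Matrix.of fun i c : Fin n =>
        y i ^ (if c.val < k then n - c.val else n - 1 - c.val)) /
        (∏ i : Fin (m + n), ∏ j ∈ Finset.Ioi i,
          (Fin.append x y i - Fin.append x y j))
      = (-1 : ℝ) ^ (m * (m - 1) / 2) *
          (∏ i : Fin m, ∏ j ∈ Finset.Ioi i, (x i - x j)) *
          (∑ s ∈ Finset.powersetCard k (Finset.univ : Finset (Fin n)), ∏ i ∈ s, y i) /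
          ∏ l : Fin m,
            (Polynomial.derivative
              ((∏ i : Fin m, (Polynomial.X - Polynomial.C (x i))) *
                ∏ j : Fin n, (Polynomial.X - Polynomial.C (y j)))).eval (x l) := by
  have hdet : det (of fun i c : Fin n => y i ^ (if c.val < k then n - c.val else n - 1 - c.val)) =
      Δ y * ∑ s ∈ powersetCard k univ, ∏ i ∈ s, y i := by
    rw [← det_pow_succAbove y ⟨k, Nat.lt_succ_of_le hk⟩]
    congr 3 with i c
    congr 1
    grind [Fin.succAbove]
  refine ⟨hdet, ?_⟩
  have hΔ := prod_Ioi_sub_ne_zero hdist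
  rw [prod_Ioi_sub_append] at hΔ
  obtain ⟨⟨hx, hxy⟩, hy⟩ := (mul_ne_zero_iff.mp hΔ).imp_left mul_ne_zero_iff.mp
  rw [hdet, prod_Ioi_sub_append, prod_eval_derivative_prod_X_sub_C_mul_prod]
  field_simp
end

section
/- For integers y, y_j, n, N with 0 ≤ n ≤ N-1 and 0 ≤ y - y_j ≤ N - 1 (more generally with the stated hypotheses allowing vanishing), the complete homogeneous symmetric polynomial evaluated at n ones admits the representation h_{y-y_j}(1^n) = ((N-n)!/(N-1)!) · ∑_{ℓ = B}^{y} (ℓ - y_j + 1)_{N-1} / ∏_{i = y-N+n, i ≠ ℓ}^{y} (ℓ - i), where B := max(y+n, y_1+1) - N ≤ y and y_1 ≥ y_j; equivalently, h_{y-y_j}(1^n) equals the sum of residues of the rational function ((N-n)!/(N-1)!) (z - y_j + 1)_{N-1} / (z - y)_{N-n+1} at the integer points z = y, y-1, ..., B. -/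
/-!
Put `m = N - n`, `r = y - y_j` and `ℓ = y - k`. The denominator of the `ℓ`-th residue is
`(-1)^k k! (m-k)!`, and its numerator `(r-k+1)_{N-1}` equals `(N-1)! C(N-1+r-k, N-1)`, which
vanishes for `r < k ≤ r + N - 1`. So the residue sum is `(N-1)!/m!` times
`∑_{k=0}^{K} (-1)^k C(m,k) C(N-1+r-k, N-1)` with `K = y - B`. Since `y_j ≤ y_1 ≤ y_j + N - 1`,
we have `min(m, r) ≤ K ≤ r + N - 1`, and all terms with `min(m, r) < k ≤ r + N - 1` vanish, so
the sum may as well run over `0 ≤ k ≤ r`. With `N = m + n` it is then the coefficient of `x^r`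
in `(1-x)^m (1-x)^{-(m+n)} = (1-x)^{-n}`, that is `h_r(1^n)`.
-/

open Finset PowerSeries Nat

theorem PowerSeries.coeff_one_sub_X_pow {R : Type*} [CommRing R] (m k : ℕ) :
    coeff k ((1 - X : R⟦X⟧) ^ m) = (-1) ^ k * m.choose k := by
  have : (1 - X : R⟦X⟧) ^ m =
      rescale (-1) (((1 + Polynomial.X) ^ m : Polynomial R) : R⟦X⟧) := by
    simp [rescale_X, sub_eq_add_neg]
  rw [this, coeff_rescale, Polynomial.coeff_coe, Polynomial.coeff_one_add_X_pow]

theorem PowerSeries.coeff_invOneSubPow {S : Type*} [CommRing S] (d r : ℕ) :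
    coeff r (invOneSubPow S d).val = (d + r - 1).choose r := by
  rcases d with _ | d
  · rcases r with _ | r <;> simp [invOneSubPow_zero, coeff_one]
  · rw [invOneSubPow_val_succ_eq_mk_add_choose, coeff_mk, add_right_comm, Nat.add_sub_cancel,
      Nat.choose_symm_add]

theorem sum_range_neg_one_pow_mul_choose_mul_add_choose {R : Type*} [CommRing R] (m n r : ℕ) :
    ∑ k ∈ range (r + 1), (-1) ^ k * m.choose k * ((m + n + (r - k) - 1).choose (r - k) : R) =
      (n + r - 1).choose r := by
  have h := congrArg (coeff r)
    (one_sub_pow_mul_invOneSubPow_val_add_eq_invOneSubPow_val (S := R) n m)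
  rw [coeff_mul, Finset.Nat.sum_antidiagonal_eq_sum_range_succ
    (fun i j => coeff i ((1 - X : R⟦X⟧) ^ m) * coeff j (invOneSubPow R (n + m)).val)] at h
  simpa [coeff_one_sub_X_pow, coeff_invOneSubPow, add_comm n m] using h

theorem sum_range_eq_sum_range_of_eq_zero {M : Type*} [AddCommMonoid M] (f : ℕ → M) {a b : ℕ}
    (hab : a ≤ b) (h : ∀ k, a ≤ k → k < b → f k = 0) :
    ∑ k ∈ range b, f k = ∑ k ∈ range a, f k :=
  (sum_subset (range_subset_range.2 hab) fun k hkb hka =>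
    h k (not_lt.1 (mt mem_range.2 hka)) (mem_range.1 hkb)).symm

theorem sum_range_neg_one_pow_mul_choose_mul_choose {R : Type*} [CommRing R] {m n r M K : ℕ}
    (hM : M + 1 = m + n) (hK : min m r < K) (hK' : K ≤ M + r + 1) :
    ∑ k ∈ range K, (-1) ^ k * m.choose k * ((M + r - k).choose M : R) =
      (n + r - 1).choose r := by
  have hvanish : ∀ k, min m r + 1 ≤ k → k ≤ M + r →
      (-1) ^ k * m.choose k * ((M + r - k).choose M : R) = 0 := by
    intro k hk hk'
    rcases le_or_gt k m with hkm | hkm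
    · rw [choose_eq_zero_of_lt (by omega : M + r - k < M)]; simp
    · rw [choose_eq_zero_of_lt hkm]; simp
  rw [sum_range_eq_sum_range_of_eq_zero _ hK fun k hk hk' => hvanish k hk (by omega),
    ← sum_range_eq_sum_range_of_eq_zero _ (by omega : min m r + 1 ≤ r + 1)
      fun k hk hk' => hvanish k hk (by omega),
    ← sum_range_neg_one_pow_mul_choose_mul_add_choose m n r]
  refine sum_congr rfl fun k hk => ?_
  rw [mem_range] at hk
  rw [show M + r - k = M + (r - k) by omega, choose_symm_add, ← hM]
  congr 4
  omega

theorem ascPochhammer_eval_natCast_sub_add_one {R : Type*} [Ring R] {M r k : ℕ}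
    (hk : k ≤ r + M) :
    (ascPochhammer R M).eval ((r : R) - k + 1) = M ! * (M + r - k).choose M := by
  rcases le_or_gt k r with hkr | hkr
  · obtain ⟨x, rfl⟩ := Nat.exists_eq_add_of_le hkr
    rw [show ((k + x : ℕ) : R) - k + 1 = ((x + 1 : ℕ) : R) by push_cast; abel,
      ← ascPochhammer_eval_cast, ascPochhammer_nat_eq_ascFactorial,
      ascFactorial_eq_factorial_mul_choose, show M + (k + x) - k = x + M by omega]
    push_cast; rfl
  · rw [show (r : R) - k + 1 = -((k - r - 1 : ℕ) : R) by
        rw [Nat.cast_sub (by omega), Nat.cast_sub (by omega)]; push_cast; abel,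
      ascPochhammer_eval_neg_coe_nat_of_lt (by omega), choose_eq_zero_of_lt (by omega)]
    simp

theorem prod_Ico_sub_eq_factorial {R : Type*} [CommRing R] (c : ℤ) (d : ℕ) :
    ∏ i ∈ Ico (c - d) c, ((c : R) - i) = d ! := by
  induction d with
  | zero => simp
  | succ d ih =>
    rw [show Ico (c - (d + 1 : ℕ)) c = insert (c - (d + 1 : ℕ)) (Ico (c - d) c) by
        ext i; simp only [mem_Ico, mem_insert]; omega,
      prod_insert (by simp only [mem_Ico]; omega), ih, factorial_succ]
    push_cast; ring

theorem prod_Ioc_sub_eq_neg_one_pow_mul_factorial {R : Type*} [CommRing R] (c : ℤ) (e : ℕ) :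
    ∏ i ∈ Ioc c (c + e), ((c : R) - i) = (-1) ^ e * e ! := by
  induction e with
  | zero => simp
  | succ e ih =>
    rw [show Ioc c (c + (e + 1 : ℕ)) = insert (c + (e + 1 : ℕ)) (Ioc c (c + e)) by
        ext i; simp only [mem_Ioc, mem_insert]; omega,
      prod_insert (by simp), ih, factorial_succ]
    push_cast; ring

theorem prod_erase_Icc_sub {R : Type*} [CommRing R] (c : ℤ) (d e : ℕ) :
    ∏ i ∈ (Icc (c - d) (c + e)).erase c, ((c : R) - i) = (-1) ^ e * (d ! * e !) := by
  rw [show (Icc (c - d) (c + e)).erase c = Ico (c - d) c ∪ Ioc c (c + e) by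
      ext i; simp only [mem_erase, mem_Icc, mem_union, mem_Ico, mem_Ioc]; omega,
    prod_union (disjoint_left.2 fun i hi hi' => by simp only [mem_Ico, mem_Ioc] at hi hi'; omega),
    prod_Ico_sub_eq_factorial, prod_Ioc_sub_eq_neg_one_pow_mul_factorial]
  ring

theorem ascPochhammer_eval_div_factorial_mul_factorial {M m r k : ℕ} (hkm : k ≤ m)
    (hk : k ≤ r + M) :
    (ascPochhammer ℝ M).eval ((r : ℝ) - k + 1) / ((-1) ^ k * ((m - k) ! * k !)) =
      M ! / m ! * ((-1) ^ k * m.choose k * (M + r - k).choose M) := by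
  rw [ascPochhammer_eval_natCast_sub_add_one hk, Nat.cast_choose ℝ hkm]
  field_simp
  rw [← pow_mul, Even.neg_one_pow ⟨k, by ring⟩, mul_one]

theorem Int.sum_Icc_eq_sum_range_sub {M : Type*} [AddCommMonoid M] (f : ℤ → M) (a b : ℤ) :
    ∑ l ∈ Finset.Icc a b, f l = ∑ k ∈ Finset.range (b + 1 - a).toNat, f (b - k) := by
  refine sum_nbij' (fun l => (b - l).toNat) (fun k => b - k) ?_ ?_ ?_ ?_ ?_ <;> intro x hx <;>
    simp only [Finset.mem_Icc, Finset.mem_range] at hx ⊢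
  · omega
  · omega
  · omega
  · omega
  · congr 1; omega

/-- `h_r(1^n)`: the complete homogeneous symmetric function at `n` ones,
`h_r(1^n) = C(n+r-1, r)` for `r ≥ 0` and `0` for `r < 0`. -/
noncomputable def hOnes (n : ℕ) (r : ℤ) : ℝ :=
  if 0 ≤ r then (Nat.choose (n + r.toNat - 1) r.toNat : ℝ) else 0

theorem stmt_13_general (N n : ℕ) (hn : n ≤ N - 1)
    (y yj y1 : ℤ) (h0 : 0 ≤ y - yj)
    (h2 : yj ≤ y1) (h3 : y1 - yj ≤ (N : ℤ) - 1) :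
    hOnes n (y - yj)
      = ((Nat.factorial (N - n) : ℝ) / (Nat.factorial (N - 1) : ℝ)) *
          ∑ l ∈ Finset.Icc (max (y + n) (y1 + 1) - N) y,
            (ascPochhammer ℝ (N - 1)).eval ((l : ℝ) - (yj : ℝ) + 1) /
              ∏ i ∈ (Finset.Icc (y - N + n) y).erase l, ((l : ℝ) - (i : ℝ)) := by
  obtain ⟨r, hr⟩ : ∃ r : ℕ, y - yj = r := ⟨(y - yj).toNat, by omega⟩
  set K := (y + 1 - (max (y + n) (y1 + 1) - N)).toNat
  have hsummand : ∀ k ∈ range K,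
      (ascPochhammer ℝ (N - 1)).eval (((y - k : ℤ) : ℝ) - yj + 1) /
        ∏ i ∈ (Icc (y - N + n) y).erase (y - k), (((y - k : ℤ) : ℝ) - i) =
      (N - 1) ! / (N - n) ! * ((-1) ^ k * (N - n).choose k * (N - 1 + r - k).choose (N - 1)) := by
    intro k hk
    rw [mem_range] at hk
    rw [show Icc (y - N + n) y = Icc (y - k - (N - n - k : ℕ)) (y - k + k) by
        congr 1 <;> omega,
      prod_erase_Icc_sub, show ((y - k : ℤ) : ℝ) - yj + 1 = (r : ℝ) - k + 1 by
        exact_mod_cast (show y - k - yj + 1 = (r : ℤ) - k + 1 by omega),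
      ascPochhammer_eval_div_factorial_mul_factorial (by omega) (by omega)]
  rw [hOnes, if_pos h0, hr, Int.toNat_natCast, Int.sum_Icc_eq_sum_range_sub,
    sum_congr rfl hsummand, ← mul_sum,
    sum_range_neg_one_pow_mul_choose_mul_choose (n := n) (by omega) (by omega) (by omega)]
  field_simp

/-- Proposition 3.2: with `0 ≤ n ≤ N-1`, `0 ≤ y - y_j ≤ N-1`,
`y_1 ≥ y_j`, `y_1 - y_j ≤ N-1`, and `B := max(y+n, y_1+1) - N`,
`h_{y-y_j}(1^n) = (N-n)!/(N-1)! · ∑_{ℓ=B}^y (ℓ-y_j+1)_{N-1} / ∏_{i=y-N+n, i≠ℓ}^y (ℓ-i)`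
(the sum of the residues of `(N-n)!/(N-1)! · (z-y_j+1)_{N-1}/(z-y)_{N-n+1}` at
`z = y, y-1, ..., B`; it is empty, hence `0`, if `B > y`). -/
theorem stmt_13 (N n : ℕ) (hN : 1 ≤ N) (hn : n ≤ N - 1)
    (y yj y1 : ℤ) (h0 : 0 ≤ y - yj) (h1 : y - yj ≤ (N : ℤ) - 1)
    (h2 : yj ≤ y1) (h3 : y1 - yj ≤ (N : ℤ) - 1) :
    hOnes n (y - yj)
      = ((Nat.factorial (N - n) : ℝ) / (Nat.factorial (N - 1) : ℝ)) *
          ∑ l ∈ Finset.Icc (max (y + n) (y1 + 1) - N) y,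
            (ascPochhammer ℝ (N - 1)).eval ((l : ℝ) - (yj : ℝ) + 1) /
              ∏ i ∈ (Finset.Icc (y - N + n) y).erase l, ((l : ℝ) - (i : ℝ)) :=
  stmt_13_general N n hn y yj y1 h0 h2 h3
end

section
/- (Particle–hole duality for multiple contour integrals) Let L = {x_1,...,x_{k+ℓ}} be a finite set of distinct reals, Q_L(z) = ∏_{x∈L}(z-x), φ a rational function with no zeros or poles on L, and S a symmetric polynomial in k variables with complementary symmetric polynomial S̃ in ℓ variables (obtained by rewriting power sums ∑ u_i^α of k arguments as t_α(L) minus power sums of the ℓ complementary arguments). Then (∏_{α=1}^{k} ∮_{Γ(L)} du_α φ(u_α)/(2πi Q_L(u_α))) (S·Δ_k²)(u) = (k!/ℓ!) · Δ(L)² · (∏_{x∈L} φ(x)/Q_L'(x)) · (∏_{α=1}^{ℓ} ∮_{Γ(L)} du_α/(2πi φ(u_α) Q_L(u_α))) (S̃·Δ_ℓ²)(u), where Γ(L) encircles exactly the points of L and Δ(L) is the Vandermonde of all points of L. -/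
open scoped Classical

/-!
Both sides are residue sums over strictly increasing tuples, i.e. over subsets `J ⊆ L` of size `k`
and `ℓ`, and `J ↦ Jᶜ` matches them. Since the power sums of `J` and `Jᶜ` add up to those of `L`,
`S(J) = S̃(Jᶜ)`, so only the weights need comparing. With `q_j = Q_L'(x_j) = ∏_{i ≠ j} (x_j - x_i)`,
splitting the pairs of `L` into those inside `J`, inside `Jᶜ`, and across gives
`Δ(L)² Δ(Jᶜ)² = Δ(J)² ∏_{j ∈ Jᶜ} q_j²`, which is the identity of weights
`Δ(J)² ∏_J φ/q = Δ(L)² ∏_L φ/q · Δ(Jᶜ)² ∏_{Jᶜ} 1/(φ q)`.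
-/

open Finset

section PairProd

variable {ι α M : Type*} [LinearOrder ι] [CommMonoid M]

def pairProd (g : ι → ι → M) (s : Finset ι) : M :=
  ∏ i ∈ s, ∏ j ∈ s with i < j, g i j

theorem pairProd_univ [Fintype ι] [LocallyFiniteOrderTop ι] (g : ι → ι → M) :
    pairProd g univ = ∏ i, ∏ j ∈ Ioi i, g i j := by
  simp only [pairProd, filter_lt_eq_Ioi]

theorem pairProd_image [LinearOrder α] {σ : α → ι} (hσ : StrictMono σ) (g : ι → ι → M)
    (s : Finset α) : pairProd g (s.image σ) = pairProd (fun a b => g (σ a) (σ b)) s := by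
  rw [pairProd, prod_image hσ.injective.injOn]
  refine prod_congr rfl fun a _ => ?_
  rw [filter_image, prod_image hσ.injective.injOn]
  simp only [hσ.lt_iff_lt]

theorem prod_prod_filter_lt_swap {g : ι → ι → M} (hg : ∀ i j, g i j = g j i) (s t : Finset ι) :
    ∏ i ∈ s, ∏ j ∈ t with j < i, g i j = ∏ i ∈ t, ∏ j ∈ s with i < j, g i j := by
  rw [prod_comm' (t' := t) (s' := fun j => s.filter (j < ·)) (by simp only [mem_filter]; tauto)]
  simp only [hg]

theorem pairProd_sq {g : ι → ι → M} (hg : ∀ i j, g i j = g j i) (s : Finset ι) :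
    pairProd g s ^ 2 = ∏ i ∈ s, ∏ j ∈ s.erase i, g i j := by
  have hsplit : ∀ i, ∏ j ∈ s.erase i, g i j
      = (∏ j ∈ s with i < j, g i j) * ∏ j ∈ s with j < i, g i j := fun i => by
    rw [← prod_filter_mul_prod_filter_not (s.erase i) (i < ·)]
    congr 2 <;> ext j <;> simp only [mem_filter, mem_erase, not_lt]
    · exact ⟨fun h => ⟨h.1.2, h.2⟩, fun h => ⟨⟨h.2.ne', h.1⟩, h.2⟩⟩
    · exact ⟨fun h => ⟨h.1.2, lt_of_le_of_ne h.2 h.1.1⟩, fun h => ⟨⟨h.2.ne, h.1⟩, h.2.le⟩⟩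
  rw [prod_congr rfl fun i _ => hsplit i, prod_mul_distrib, prod_prod_filter_lt_swap hg, sq,
    pairProd]

theorem pairProd_union {g : ι → ι → M} (hg : ∀ i j, g i j = g j i) {s t : Finset ι}
    (hst : Disjoint s t) :
    pairProd g (s ∪ t) = pairProd g s * pairProd g t * ∏ i ∈ s, ∏ j ∈ t, g i j := by
  have hcross : ∏ i ∈ s, ∏ j ∈ t, g i j
      = (∏ i ∈ s, ∏ j ∈ t with i < j, g i j) * ∏ i ∈ t, ∏ j ∈ s with i < j, g i j := by
    rw [← prod_prod_filter_lt_swap hg s t, ← prod_mul_distrib]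
    refine prod_congr rfl fun i hi => ?_
    rw [← prod_filter_mul_prod_filter_not t (i < ·)]
    congr 2
    refine filter_congr fun j hj => ?_
    rw [not_lt, le_iff_lt_or_eq, or_iff_left]
    rintro rfl
    exact disjoint_left.mp hst hi hj
  rw [hcross, pairProd, prod_union hst]
  simp only [filter_union, prod_union (disjoint_filter_filter hst), prod_mul_distrib, pairProd]
  ac_rfl

theorem pairProd_univ_mul_pairProd_compl [Fintype ι] {g : ι → ι → M}
    (hg : ∀ i j, g i j = g j i) (s : Finset ι) :
    pairProd g univ * pairProd g sᶜ = pairProd g s * ∏ j ∈ sᶜ, ∏ i ∈ univ.erase j, g j i := by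
  have herase : ∀ j ∈ sᶜ, univ.erase j = s ∪ sᶜ.erase j := fun j hj => by
    rw [← union_compl s, erase_union_distrib, erase_eq_of_notMem (mem_compl.mp hj)]
  have hswap : ∏ j ∈ sᶜ, ∏ i ∈ s, g j i = ∏ i ∈ s, ∏ j ∈ sᶜ, g i j := by
    rw [prod_comm]; simp only [hg]
  rw [prod_congr rfl fun j hj => by
      rw [herase j hj, prod_union (disjoint_compl_right.mono_right (erase_subset _ _))],
    prod_mul_distrib, ← pairProd_sq hg, hswap, ← union_compl s,
    pairProd_union hg disjoint_compl_right, sq]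
  ac_rfl

end PairProd

section ComplementaryTuples

variable {ι M : Type*} [LinearOrder ι] {k l : ℕ}

theorem StrictMono.eq_of_image_univ_eq {σ σ' : Fin k → ι} (hσ : StrictMono σ)
    (hσ' : StrictMono σ') (h : univ.image σ = univ.image σ') : σ = σ' := by
  rw [← hσ.range_inj hσ', ← Set.image_univ, ← Set.image_univ, ← coe_univ, ← coe_image,
    ← coe_image, h]

variable [Fintype ι] [AddCommMonoid M]

theorem card_compl_image_univ (hcard : Fintype.card ι = k + l) {σ : Fin k → ι}
    (hσ : Function.Injective σ) : (univ.image σ)ᶜ.card = l := by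
  rw [card_compl, card_image_of_injective _ hσ, card_univ, Fintype.card_fin, hcard,
    Nat.add_sub_cancel_left]

theorem sum_strictMono_eq_sum_strictMono_compl (hcard : Fintype.card ι = k + l)
    (f : (Fin k → ι) → M) (g : (Fin l → ι) → M)
    (hfg : ∀ σ τ, StrictMono σ → StrictMono τ → univ.image τ = (univ.image σ)ᶜ → f σ = g τ) :
    ∑ σ ∈ univ.filter StrictMono, f σ = ∑ τ ∈ univ.filter StrictMono, g τ := by
  have hk : Fintype.card ι = l + k := hcard.trans (add_comm k l)
  refine sum_bij (fun σ hσ => (univ.image σ)ᶜ.orderEmbOfFin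
      (card_compl_image_univ hcard (mem_filter.mp hσ).2.injective)) ?_ ?_ ?_ ?_
  · exact fun σ _ => mem_filter.mpr ⟨mem_univ _, OrderEmbedding.strictMono _⟩
  · intro σ hσ σ' hσ' h
    refine (mem_filter.mp hσ).2.eq_of_image_univ_eq (mem_filter.mp hσ').2 (compl_injective ?_)
    simpa only [image_orderEmbOfFin_univ] using congrArg (univ.image ·) h
  · intro τ hτ
    have hτ := (mem_filter.mp hτ).2
    set σ := (univ.image τ)ᶜ.orderEmbOfFin (card_compl_image_univ hk hτ.injective)
    have hσ : univ.image σ = (univ.image τ)ᶜ := image_orderEmbOfFin_univ _ _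
    refine ⟨σ, mem_filter.mpr ⟨mem_univ _, σ.strictMono⟩, ?_⟩
    refine (orderEmbOfFin_unique _ (fun b => ?_) hτ).symm
    rw [hσ, compl_compl]
    exact mem_image_of_mem τ (mem_univ b)
  · intro σ hσ
    exact hfg _ _ (mem_filter.mp hσ).2 (OrderEmbedding.strictMono _)
      (image_orderEmbOfFin_univ _ _)

end ComplementaryTuples

section SqVandermonde

variable {ι α K : Type*} [LinearOrder ι] [CommRing K]

def sqVandermonde (x : ι → K) (s : Finset ι) : K :=
  pairProd (fun i j => (x i - x j) ^ 2) s

theorem sq_prod_prod_Ioi_sub_eq_sqVandermonde [LinearOrder α] [Fintype α]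
    [LocallyFiniteOrderTop α] (x : ι → K) {σ : α → ι} (hσ : StrictMono σ) :
    (∏ a, ∏ b ∈ Ioi a, (x (σ a) - x (σ b))) ^ 2 = sqVandermonde x (univ.image σ) := by
  rw [sqVandermonde, pairProd_image hσ, pairProd_univ]
  simp only [prod_pow]

variable [Fintype ι]

theorem sqVandermonde_univ_mul_compl (x : ι → K) (s : Finset ι) :
    sqVandermonde x univ * sqVandermonde x sᶜ
      = sqVandermonde x s * ∏ j ∈ sᶜ, (∏ i ∈ univ.erase j, (x j - x i)) ^ 2 := by
  simp only [sqVandermonde, ← prod_pow]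
  exact pairProd_univ_mul_pairProd_compl (fun i j => by ring) s

theorem sqVandermonde_mul_prod_div_eq_compl {F : Type*} [Field F] {x : ι → F}
    (hx : Function.Injective x) {w q : ι → F} (hw : ∀ i, w i ≠ 0)
    (hq : ∀ j, q j = ∏ i ∈ univ.erase j, (x j - x i))
    (s : Finset ι) :
    sqVandermonde x s * ∏ i ∈ s, w i / q i
      = sqVandermonde x univ * (∏ i, w i / q i) *
          (sqVandermonde x sᶜ * ∏ j ∈ sᶜ, 1 / (w j * q j)) := by
  have hq0 : ∀ j, q j ≠ 0 := fun j => by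
    rw [hq]
    exact prod_ne_zero_iff.mpr fun i hi => sub_ne_zero.mpr (hx.ne (ne_of_mem_erase hi).symm)
  have hwq : ∏ j ∈ sᶜ, (w j / q j) * (1 / (w j * q j)) = 1 / (∏ j ∈ sᶜ, q j) ^ 2 := by
    rw [← prod_pow, one_div, ← prod_inv_distrib]
    refine prod_congr rfl fun j _ => ?_
    field_simp [hw j, hq0 j]
  calc sqVandermonde x s * ∏ i ∈ s, w i / q i
      = sqVandermonde x s * (∏ j ∈ sᶜ, q j) ^ 2 * (∏ i ∈ s, w i / q i) *
          (1 / (∏ j ∈ sᶜ, q j) ^ 2) := by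
        field_simp [prod_ne_zero_iff.mpr fun j (_ : j ∈ sᶜ) => hq0 j]
    _ = sqVandermonde x univ * sqVandermonde x sᶜ * (∏ i ∈ s, w i / q i) *
          ∏ j ∈ sᶜ, (w j / q j) * (1 / (w j * q j)) := by
        rw [hwq, sqVandermonde_univ_mul_compl, ← prod_pow]
        simp only [hq]
    _ = _ := by
        rw [prod_mul_distrib, ← prod_mul_prod_compl s (fun i => w i / q i)]
        ring

end SqVandermonde

theorem Polynomial.eval_derivative_prod_X_sub_C_eq {ι R : Type*} [Fintype ι] [DecidableEq ι]
    [CommRing R] (x : ι → R) (j : ι) :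
    (derivative (∏ i, (X - C (x i)))).eval (x j) = ∏ i ∈ univ.erase j, (x j - x i) := by
  rw [← Lagrange.nodal, Lagrange.eval_nodal_derivative_eval_node_eq (mem_univ j),
    Lagrange.eval_nodal]

theorem stmt_17_general (k l : ℕ) (xL : Fin (k + l) → ℝ) (hdist : Function.Injective xL)
    (φ : ℝ → ℝ) (hφ : ∀ i, φ (xL i) ≠ 0)
    (S : MvPolynomial (Fin k) ℝ)
    (St : MvPolynomial (Fin l) ℝ)
    (hcompl : ∀ (u : Fin k → ℝ) (v : Fin l → ℝ),
      (∀ a : ℕ, 1 ≤ a → (∑ i, u i ^ a) + ∑ j, v j ^ a = ∑ i, xL i ^ a) →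
      MvPolynomial.eval u S = MvPolynomial.eval v St)
    (Q' : ℝ → ℝ)
    (hQ' : ∀ t, Q' t =
      (Polynomial.derivative (∏ i, (Polynomial.X - Polynomial.C (xL i)))).eval t) :
    (Nat.factorial k : ℝ) *
        ∑ σ ∈ Finset.univ.filter (fun σ : Fin k → Fin (k + l) => StrictMono σ),
          (MvPolynomial.eval (fun a => xL (σ a)) S *
              (∏ i : Fin k, ∏ j ∈ Finset.Ioi i, (xL (σ i) - xL (σ j))) ^ 2) *
            ∏ a : Fin k, φ (xL (σ a)) / Q' (xL (σ a))
      = ((Nat.factorial k : ℝ) / (Nat.factorial l : ℝ)) *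
          (∏ i : Fin (k + l), ∏ j ∈ Finset.Ioi i, (xL i - xL j)) ^ 2 *
          (∏ i : Fin (k + l), φ (xL i) / Q' (xL i)) *
          ((Nat.factorial l : ℝ) *
            ∑ τ ∈ Finset.univ.filter (fun τ : Fin l → Fin (k + l) => StrictMono τ),
              (MvPolynomial.eval (fun a => xL (τ a)) St *
                  (∏ i : Fin l, ∏ j ∈ Finset.Ioi i, (xL (τ i) - xL (τ j))) ^ 2) *
                ∏ a : Fin l, 1 / (φ (xL (τ a)) * Q' (xL (τ a)))) := by
  have hq : ∀ j, Q' (xL j) = ∏ i ∈ univ.erase j, (xL j - xL i) := fun j => by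
    rw [hQ', Polynomial.eval_derivative_prod_X_sub_C_eq]
  have hL : (∏ i : Fin (k + l), ∏ j ∈ Ioi i, (xL i - xL j)) ^ 2 = sqVandermonde xL univ := by
    simpa using sq_prod_prod_Ioi_sub_eq_sqVandermonde xL strictMono_id
  rw [sum_strictMono_eq_sum_strictMono_compl (Fintype.card_fin _) _
    (fun τ => (∏ i : Fin (k + l), ∏ j ∈ Ioi i, (xL i - xL j)) ^ 2 *
      (∏ i, φ (xL i) / Q' (xL i)) * _) fun σ τ hσ hτ hστ => ?_, ← mul_sum]
  · field_simp
  have hS : MvPolynomial.eval (fun a => xL (σ a)) S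
      = MvPolynomial.eval (fun a => xL (τ a)) St :=
    hcompl _ _ fun p _ => by
      rw [← sum_image (f := (xL · ^ p)) hσ.injective.injOn,
        ← sum_image (f := (xL · ^ p)) hτ.injective.injOn, hστ, sum_add_sum_compl]
  rw [hS, sq_prod_prod_Ioi_sub_eq_sqVandermonde xL hσ,
    sq_prod_prod_Ioi_sub_eq_sqVandermonde xL hτ,
    ← prod_image (f := fun i => φ (xL i) / Q' (xL i)) hσ.injective.injOn,
    ← prod_image (f := fun i => 1 / (φ (xL i) * Q' (xL i))) hτ.injective.injOn, hστ, hL,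
    mul_assoc, sqVandermonde_mul_prod_div_eq_compl hdist hφ hq]
  ring

/-- particle–hole duality, formula (8.9): let `L = {x_1,...,x_{k+ℓ}}` be
distinct reals, `Q_L(z) = ∏_{x∈L}(z-x)`, `φ` a function with no zeros (or poles) on `L`,
`S` a symmetric polynomial in `k` variables and `S̃` its complementary symmetric polynomial
in `ℓ` variables (characterized by: whenever the power sums of `u` and `v` add up to the
power sums of `L`, then `S(u) = S̃(v)`).  Interpreting each `k`-fold contour integral over
`Γ(L)` as `k!` times the sum over `k`-element subsets of `L` (enumerated by strictly
increasing index tuples), one has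
`(∏_{α=1}^k ∮_{Γ(L)} φ/Q_L)(S·Δ_k²)
 = (k!/ℓ!)·Δ(L)²·(∏_{x∈L} φ(x)/Q_L'(x))·(∏_{α=1}^ℓ ∮_{Γ(L)} 1/(φ·Q_L))(S̃·Δ_ℓ²)`. -/
theorem stmt_17 (k l : ℕ) (xL : Fin (k + l) → ℝ) (hdist : Function.Injective xL)
    (φ : ℝ → ℝ) (hφ : ∀ i, φ (xL i) ≠ 0)
    (S : MvPolynomial (Fin k) ℝ) (hS : S.IsSymmetric)
    (St : MvPolynomial (Fin l) ℝ) (hSt : St.IsSymmetric)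
    (hcompl : ∀ (u : Fin k → ℝ) (v : Fin l → ℝ),
      (∀ a : ℕ, 1 ≤ a → (∑ i, u i ^ a) + ∑ j, v j ^ a = ∑ i, xL i ^ a) →
      MvPolynomial.eval u S = MvPolynomial.eval v St)
    (Q' : ℝ → ℝ)
    (hQ' : ∀ t, Q' t =
      (Polynomial.derivative (∏ i, (Polynomial.X - Polynomial.C (xL i)))).eval t) :
    (Nat.factorial k : ℝ) *
        ∑ σ ∈ Finset.univ.filter (fun σ : Fin k → Fin (k + l) => StrictMono σ),
          (MvPolynomial.eval (fun a => xL (σ a)) S *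
              (∏ i : Fin k, ∏ j ∈ Finset.Ioi i, (xL (σ i) - xL (σ j))) ^ 2) *
            ∏ a : Fin k, φ (xL (σ a)) / Q' (xL (σ a))
      = ((Nat.factorial k : ℝ) / (Nat.factorial l : ℝ)) *
          (∏ i : Fin (k + l), ∏ j ∈ Finset.Ioi i, (xL i - xL j)) ^ 2 *
          (∏ i : Fin (k + l), φ (xL i) / Q' (xL i)) *
          ((Nat.factorial l : ℝ) *
            ∑ τ ∈ Finset.univ.filter (fun τ : Fin l → Fin (k + l) => StrictMono τ),
              (MvPolynomial.eval (fun a => xL (τ a)) St *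
                  (∏ i : Fin l, ∏ j ∈ Finset.Ioi i, (xL (τ i) - xL (τ j))) ^ 2) *
                ∏ a : Fin l, 1 / (φ (xL (τ a)) * Q' (xL (τ a)))) :=
  stmt_17_general k l xL hdist φ hφ S St hcompl Q' hQ'
end
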